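/- arXiv:1201.1348 — 2 statements merged into one kernel-verified Lean document; each statement's English description precedes it below -/
import Mathlib

section
/- Viewing Sym(n) as a reflection group on ℂⁿ by permuting coordinates (reflections being transpositions), every reflection subgroup of Sym(n) is a parabolic subgroup, i.e., every subgroup generated by transpositions is the pointwise stabiliser of a subset of ℂⁿ. -/
/-- A transposition in the symmetric group on `Fin n`. -/
def IsTransposition {n : ℕ} (g : Equiv.Perm (Fin n)) : Prop :=
  ∃ i j : Fin n, i ≠ j ∧ g = Equiv.swap i j

/-- The fixed space in `ℂⁿ` of a subgroup of `Sym(n)` acting by permuting coordinates. -/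
noncomputable def permFixedSpace {n : ℕ} (H : Subgroup (Equiv.Perm (Fin n))) :
    Submodule ℂ (Fin n → ℂ) where
  carrier := {x | ∀ g ∈ H, ∀ i, x (g i) = x i}
  zero_mem' := fun _ _ _ => rfl
  add_mem' := by
    intro a b ha hb g hg i
    simp [Pi.add_apply, ha g hg i, hb g hg i]
  smul_mem' := by
    intro c a ha g hg i
    simp [Pi.smul_apply, ha g hg i]

/-- The rank of a subgroup of `Sym(n)` as a group acting on `ℂⁿ`:
the codimension of its fixed space. -/
noncomputable def permRank {n : ℕ} (H : Subgroup (Equiv.Perm (Fin n))) : ℕ :=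
  n - Module.finrank ℂ (permFixedSpace H)

/-- `H` is a parabolic subgroup of `Sym(n)`: the pointwise stabiliser of a
subset of `ℂⁿ`. -/
def PermIsParabolic {n : ℕ} (H : Subgroup (Equiv.Perm (Fin n))) : Prop :=
  ∃ X : Set (Fin n → ℂ), ∀ g : Equiv.Perm (Fin n),
    g ∈ H ↔ ∀ x ∈ X, ∀ i, x (g i) = x i

/-!
A subgroup `G` generated by transpositions contains every permutation that maps each point into
its own `G`-orbit (Mathlib's `Equiv.Perm.mem_closure_isSwap`). A vector `x ∈ ℂⁿ` whose coordinates
take distinct values on distinct `G`-orbits is fixed by exactly those permutations, so `G` is the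
stabiliser of `x`.
-/

open MulAction Equiv Subgroup

theorem MulAction.exists_eq_iff_mem_orbit (G α R : Type*) [Group G] [MulAction G α] [Countable α]
    [AddMonoidWithOne R] [CharZero R] :
    ∃ x : α → R, ∀ a b, x a = x b ↔ a ∈ orbit G b := by
  obtain ⟨e, he⟩ := Countable.exists_injective_nat (orbitRel.Quotient G α)
  refine ⟨fun a => (e (Quotient.mk _ a) : R), fun a b => ?_⟩
  rw [Nat.cast_inj, he.eq_iff, Quotient.eq, orbitRel_apply]

theorem Equiv.Perm.mem_closure_isSwap_of_finite {α : Type*} [DecidableEq α] [Finite α] {S : Set (Perm α)}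
    (hS : ∀ f ∈ S, f.IsSwap) {f : Perm α} :
    f ∈ closure S ↔ ∀ a, f a ∈ orbit (closure S) a :=
  (mem_closure_isSwap hS).trans (and_iff_right (Set.toFinite _))

/-- Every reflection subgroup of `Sym(n)` (a subgroup generated by transpositions),
viewed in the reflection representation on `ℂⁿ`, is a parabolic subgroup: the
pointwise stabiliser of some subset of `ℂⁿ`. -/
theorem reflection_subgroups_of_symmetric_group_are_parabolic
    (n : ℕ) (H : Subgroup (Equiv.Perm (Fin n)))
    (hH : ∃ S : Set (Equiv.Perm (Fin n)),
      (∀ s ∈ S, IsTransposition s) ∧ H = Subgroup.closure S) :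
    PermIsParabolic H := by
  obtain ⟨S, hS, rfl⟩ := hH
  obtain ⟨x, hx⟩ := exists_eq_iff_mem_orbit (closure S) (Fin n) ℂ
  refine ⟨{x}, fun g => ?_⟩
  simp only [Set.mem_singleton_iff, forall_eq, hx]
  exact Perm.mem_closure_isSwap_of_finite hS
end

section
/- Let G be the symmetric group Sym(n) acting on ℂⁿ by permuting coordinates, and let R be a set of n−1 transpositions generating G. Then for every subset S ⊆ R, the subgroup generated by S is a parabolic subgroup of G (i.e., a pointwise stabiliser of a subset of ℂⁿ). -/
/-!
A subgroup of `Sym(n)` generated by transpositions consists exactly of the permutations that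
map every point into its own orbit. Such a subgroup is the pointwise stabiliser of its fixed
space: a permutation fixing every invariant vector fixes in particular the indicator vector of
each orbit, so it maps each point into that point's orbit.
-/

open Equiv MulAction

theorem isTransposition_iff_isSwap {n : ℕ} {g : Perm (Fin n)} :
    IsTransposition g ↔ g.IsSwap :=
  Iff.rfl

theorem mem_closure_isSwap_iff_forall_apply_mem_orbit {α : Type*} [Finite α] [DecidableEq α]
    {S : Set (Perm α)} (hS : ∀ f ∈ S, f.IsSwap) {f : Perm α} :
    f ∈ Subgroup.closure S ↔ ∀ x, f x ∈ orbit (Subgroup.closure S) x :=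
  (mem_closure_isSwap hS).trans (and_iff_right (Set.toFinite _))

theorem forall_apply_mem_orbit_of_forall_invariant {α M : Type*} [Nontrivial M]
    {H : Subgroup (Perm α)} {g : Perm α}
    (hg : ∀ x : α → M, (∀ h ∈ H, ∀ i, x (h i) = x i) → ∀ i, x (g i) = x i) (a : α) :
    g a ∈ orbit H a := by
  classical
  obtain ⟨m₀, m₁, hne⟩ := exists_pair_ne M
  let indicator : α → M := fun i => if i ∈ orbit H a then m₁ else m₀
  have hinv : ∀ h ∈ H, ∀ i, indicator (h i) = indicator i := fun h hh i => by
    have : h i ∈ orbit H a ↔ i ∈ orbit H a := by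
      rw [show h i = (⟨h, hh⟩ : H) • i from rfl, mem_orbit_symm, orbit_smul, ← mem_orbit_symm]
    simp only [indicator, this]
  by_contra hga
  have := hg indicator hinv a
  simp only [indicator, hga, mem_orbit_self, if_true, if_false] at this
  exact hne this

theorem permIsParabolic_of_forall_apply_mem_orbit {n : ℕ} {H : Subgroup (Perm (Fin n))}
    (hH : ∀ g : Perm (Fin n), (∀ a, g a ∈ orbit H a) → g ∈ H) : PermIsParabolic H :=
  ⟨permFixedSpace H, fun g =>
    ⟨fun hg _ hx i => hx g hg i,
      fun hfix => hH g (forall_apply_mem_orbit_of_forall_invariant fun x hx => hfix x hx)⟩⟩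

theorem subsets_of_generating_transpositions_generate_parabolics_general
    (n : ℕ) (R : Finset (Equiv.Perm (Fin n)))
    (hR : ∀ r ∈ R, IsTransposition r) :
    ∀ S ⊆ R, PermIsParabolic (Subgroup.closure (S : Set (Equiv.Perm (Fin n)))) := by
  intro S hS
  have hswap : ∀ s ∈ (S : Set (Perm (Fin n))), s.IsSwap :=
    fun s hs => isTransposition_iff_isSwap.mp (hR s (hS hs))
  exact permIsParabolic_of_forall_apply_mem_orbit fun _ =>
    (mem_closure_isSwap_iff_forall_apply_mem_orbit hswap).mpr

/-- Corollary 2 for `Sym(n)`: if `R` is a set of `n − 1` transpositions generating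
`Sym(n)`, then every subset of `R` generates a parabolic subgroup (a pointwise
stabiliser of a subset of `ℂⁿ`). -/
theorem subsets_of_generating_transpositions_generate_parabolics
    (n : ℕ) (R : Finset (Equiv.Perm (Fin n)))
    (hR : ∀ r ∈ R, IsTransposition r) (hcard : R.card = n - 1)
    (hgen : Subgroup.closure (R : Set (Equiv.Perm (Fin n))) = ⊤) :
    ∀ S ⊆ R, PermIsParabolic (Subgroup.closure (S : Set (Equiv.Perm (Fin n)))) :=
  subsets_of_generating_transpositions_generate_parabolics_general n R hR
end
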